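/- Time-warping invariance of the ISS of increments: let x be a d-dimensional real time series of length T, let 1 ≤ t_0 ≤ T, and let y be the stuttered time series of length T+1 defined by y_i = x_i for i ≤ t_0 and y_i = x_{i−1} for i > t_0 (the value x_{t_0} is repeated once). Then for every word w (all of whose letters have at least one nonzero entry), ⟨w, ISS_{0,T}(δx)⟩ = ⟨w, ISS_{0,T+1}(δy)⟩, where the increment series of a time series z is δz_1 := 0 and δz_i := z_i − z_{i−1} for i ≥ 2. -/
import Mathlib


/-- The monomial `x_t^{[a]} = ∏_j (x_t^{(j)})^{a_j}`. -/
def mono {d : ℕ} (x : ℕ → Fin d → ℝ) (t : ℕ) (a : Fin d → ℕ) : ℝ :=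
  ∏ j, (x t j) ^ (a j)

/-- The iterated-sums signature coefficient
`⟨[a_1]⋯[a_p], ISS_{s,t}(x)⟩ = ∑_{s < t_1 < ⋯ < t_p ≤ t} x_{t_1}^{[a_1]} ⋯ x_{t_p}^{[a_p]}`. -/
def iss {d : ℕ} (x : ℕ → Fin d → ℝ) : List (Fin d → ℕ) → ℕ → ℕ → ℝ
  | [], _, _ => 1
  | a :: w, s, t => ∑ i ∈ Finset.Ioc s t, mono x i a * iss x w i t

/-- The increment series `δz` of a time series `z`: `δz_1 := 0` and
`δz_i := z_i − z_{i−1}` for `i ≥ 2`. -/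
def delta {d : ℕ} (z : ℕ → Fin d → ℝ) : ℕ → Fin d → ℝ :=
  fun i => if 2 ≤ i then z i - z (i - 1) else 0

lemma mono_congr {d : ℕ} {x y : ℕ → Fin d → ℝ} {s t : ℕ} (a : Fin d → ℕ)
    (h : x s = y t) : mono x s a = mono y t a := by
  unfold mono; rw [h]

lemma iss_warp_key {d T : ℕ} (x y : ℕ → Fin d → ℝ) (t₀ : ℕ)
    (ht₀1 : 1 ≤ t₀) (ht₀2 : t₀ ≤ T)
    (hy_le : ∀ i, i ≤ t₀ → y i = x i)
    (hy_gt : ∀ i, t₀ < i → y i = x (i - 1)) :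
    ∀ (w : List (Fin d → ℕ)), (∀ a ∈ w, ∃ j, a j ≠ 0) → ∀ s,
      iss (delta x) w s T = iss (delta y) w (if s ≤ t₀ then s else s + 1) (T + 1) := by
  have hdy : ∀ i, 1 ≤ i → delta y (if i ≤ t₀ then i else i + 1) = delta x i := by
    intro i hi
    by_cases h : i ≤ t₀
    · rw [if_pos h]
      unfold delta
      by_cases h2 : 2 ≤ i
      · rw [if_pos h2, if_pos h2, hy_le i h, hy_le (i-1) (le_trans (Nat.sub_le i 1) h)]
      · rw [if_neg h2, if_neg h2]
    · rw [if_neg h]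
      push_neg at h
      unfold delta
      rw [if_pos (by omega : 2 ≤ i + 1), if_pos (by omega : 2 ≤ i)]
      simp only [Nat.add_sub_cancel]
      rw [hy_gt (i+1) (by omega), hy_gt i h]
      simp
  have hdy0 : delta y (t₀ + 1) = 0 := by
    unfold delta
    rw [if_pos (by omega), hy_gt (t₀+1) (by omega)]
    simp [hy_le t₀ le_rfl]
  intro w
  induction w with
  | nil => intro _ s; rfl
  | cons a w ih =>
    intro hl s
    obtain ⟨j, hj⟩ := hl a (by simp)
    have hw : ∀ b ∈ w, ∃ j, b j ≠ 0 := fun b hb => hl b (by simp [hb])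
    show (∑ i ∈ Finset.Ioc s T, mono (delta x) i a * iss (delta x) w i T)
       = ∑ i ∈ Finset.Ioc (if s ≤ t₀ then s else s+1) (T+1),
           mono (delta y) i a * iss (delta y) w i (T+1)
    conv_rhs => rw [← Finset.sum_erase (a := t₀ + 1) _ (by
        have : mono (delta y) (t₀+1) a = 0 := by
          unfold mono
          apply Finset.prod_eq_zero (Finset.mem_univ j)
          rw [hdy0]
          exact zero_pow hj
        rw [this, zero_mul])]
    refine Finset.sum_nbij' (i := fun i => if i ≤ t₀ then i else i + 1)
      (j := fun i => if i ≤ t₀ then i else i - 1) ?_ ?_ ?_ ?_ ?_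
    · intro i hi
      simp only [Finset.mem_Ioc, Finset.mem_erase] at hi ⊢
      split_ifs at hi ⊢ <;> omega
    · intro i hi
      simp only [Finset.mem_Ioc, Finset.mem_erase] at hi ⊢
      split_ifs at hi ⊢ <;> omega
    · intro i hi
      simp only [Finset.mem_Ioc] at hi
      split_ifs <;> omega
    · intro i hi
      simp only [Finset.mem_Ioc, Finset.mem_erase] at hi
      split_ifs <;> omega
    · intro i hi
      simp only [Finset.mem_Ioc] at hi
      rw [mono_congr a (hdy i (by omega)).symm, ih hw i]

/-- Time-warping invariance of the ISS of increments: if `y` of length `T+1` is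
obtained from `x` of length `T` by stuttering (repeating the value at position
`t_0`, `1 ≤ t_0 ≤ T`, once), then `⟨w, ISS_{0,T}(δx)⟩ = ⟨w, ISS_{0,T+1}(δy)⟩`
for every word `w` all of whose letters have at least one nonzero entry. -/
theorem iss_increments_time_warping_invariant {d T : ℕ} (x y : ℕ → Fin d → ℝ)
    (t₀ : ℕ) (ht₀1 : 1 ≤ t₀) (ht₀2 : t₀ ≤ T)
    (hy_le : ∀ i, i ≤ t₀ → y i = x i)
    (hy_gt : ∀ i, t₀ < i → y i = x (i - 1))
    (w : List (Fin d → ℕ)) (hletters : ∀ a ∈ w, ∃ j, a j ≠ 0) :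
    iss (delta x) w 0 T = iss (delta y) w 0 (T + 1) := by
  have := iss_warp_key x y t₀ ht₀1 ht₀2 hy_le hy_gt w hletters 0
  rwa [if_pos (by omega : (0:ℕ) ≤ t₀)] at this
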